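/- arXiv:2012.14002 — 5 statements merged into one kernel-verified Lean document; each statement's English description precedes it below -/
import Mathlib

section
/- Let p₁, p₂ ≥ 2 be coprime integers and φ_{p_i} the radical-inverse functions. Fix s₁, s₂ ≥ 1 and, for i = 1,2, numbers y_i = Σ_{1≤j≤s_i} y_{i,j} p_i^{-j} and k_i = Σ_{1≤j≤s_i} y_{i,j} p_i^{j-1}. Let M₁, M₂ be the integers in [0, p₁^{s₁}) and [0, p₂^{s₂}) with p₂^{s₂} M₁ ≡ 1 (mod p₁^{s₁}) and p₁^{s₁} M₂ ≡ 1 (mod p₂^{s₂}). Then for every nonnegative integer k, (φ_{p₁}(k), φ_{p₂}(k)) ∈ [y₁, y₁ + p₁^{-s₁}) × [y₂, y₂ + p₂^{-s₂}) if and only if k ≡ p₂^{s₂} M₁ k₁ + p₁^{s₁} M₂ k₂ (mod p₁^{s₁} p₂^{s₂}). -/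
/-!
Writing `k = k % p + p * (k / p)`, the radical inverse satisfies
`φ_p(k) = (k % p + φ_p(k / p)) / p` with `φ_p` taking values in `[0, 1)`. Peeling off one digit
at a time, `φ_p(k)` lies in the elementary interval `[y, y + p^{-s})` exactly when the first `s`
base-`p` digits of `k` are those of `k₁`, i.e. `k ≡ k₁ [MOD p^s]`. The two congruences combine by
the Chinese remainder theorem, `p₂^{s₂} M₁ k₁ + p₁^{s₁} M₂ k₂` being the usual explicit solution.
-/

/-- The van der Corput radical-inverse function in base `p`. -/
noncomputable def radInv (p k : ℕ) : ℝ :=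
  ∑ i ∈ Finset.range (Nat.digits p k).length,
    ((Nat.digits p k).getD i 0 : ℝ) / (p : ℝ) ^ (i + 1)

open Finset

theorem Nat.modEq_add_mul_iff {p q a b k : ℕ} (ha : a < p) :
    k ≡ a + p * b [MOD p * q] ↔ k % p = a ∧ k / p ≡ b [MOD q] := by
  have hp : 0 < p := by omega
  have hmod : (a + p * b) % p = a := by rw [Nat.add_mul_mod_self_left, Nat.mod_eq_of_lt ha]
  have hdiv : (a + p * b) / p = b := by
    rw [Nat.add_mul_div_left _ _ hp, Nat.div_eq_of_lt ha, zero_add]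
  unfold Nat.ModEq
  rw [Nat.mod_mul, Nat.mod_mul (x := a + p * b), hmod, hdiv]
  constructor
  · intro h
    have hlow : k % p = a := by
      simpa [Nat.add_mul_mod_self_left, Nat.mod_eq_of_lt (Nat.mod_lt k hp), Nat.mod_eq_of_lt ha]
        using congrArg (· % p) h
    exact ⟨hlow, by rw [hlow] at h; exact Nat.eq_of_mul_eq_mul_left hp (by omega)⟩
  · rintro ⟨hlow, hhigh⟩
    rw [hlow, hhigh]

theorem Nat.modEq_and_modEq_iff_modEq_crt {m n M₁ M₂ k k₁ k₂ : ℕ} (hmn : m.Coprime n)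
    (hM₁ : n * M₁ ≡ 1 [MOD m]) (hM₂ : m * M₂ ≡ 1 [MOD n]) :
    (k ≡ k₁ [MOD m] ∧ k ≡ k₂ [MOD n]) ↔ k ≡ n * M₁ * k₁ + m * M₂ * k₂ [MOD m * n] := by
  set c := n * M₁ * k₁ + m * M₂ * k₂
  have hc₁ : c ≡ k₁ [MOD m] := by
    simpa using (hM₁.mul_right k₁).add
      (Nat.modEq_zero_iff_dvd.2 (dvd_mul_of_dvd_left (dvd_mul_right m M₂) k₂))
  have hc₂ : c ≡ k₂ [MOD n] := by
    simpa using (Nat.modEq_zero_iff_dvd.2 (dvd_mul_of_dvd_left (dvd_mul_right n M₁) k₁)).add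
      (hM₂.mul_right k₂)
  rw [← Nat.modEq_and_modEq_iff_modEq_mul hmn]
  exact and_congr ⟨fun h => h.trans hc₁.symm, fun h => h.trans hc₁⟩
    ⟨fun h => h.trans hc₂.symm, fun h => h.trans hc₂⟩

theorem natCast_add_mem_Ico_add_iff {a b : ℕ} {r y ε : ℝ} (hr₀ : 0 ≤ r) (hr₁ : r < 1)
    (hy : 0 ≤ y) (hyε : y + ε ≤ 1) :
    (a : ℝ) + r ∈ Set.Ico (b + y) (b + y + ε) ↔ a = b ∧ r ∈ Set.Ico y (y + ε) := by
  constructor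
  · rintro ⟨hlo, hhi⟩
    have hab : a = b := by
      have h₁ : a < b + 1 := by exact_mod_cast (by linarith : (a : ℝ) < b + 1)
      have h₂ : b < a + 1 := by exact_mod_cast (by linarith : (b : ℝ) < a + 1)
      omega
    subst hab
    exact ⟨rfl, by linarith, by linarith⟩
  · rintro ⟨rfl, hlo, hhi⟩
    exact ⟨by linarith, by linarith⟩

theorem radInv_zero (p : ℕ) : radInv p 0 = 0 := by simp [radInv]

theorem radInv_eq_mod_add_div {p : ℕ} (hp : 2 ≤ p) (k : ℕ) :
    radInv p k = ((k % p : ℕ) + radInv p (k / p)) / p := by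
  rcases Nat.eq_zero_or_pos k with rfl | hk
  · simp [radInv_zero]
  · rw [radInv, Nat.digits_def' hp hk, List.length_cons, sum_range_succ', radInv, add_div,
      sum_div, add_comm]
    simp only [List.getD_cons_succ, List.getD_cons_zero, pow_succ, pow_zero, one_mul, div_div]

theorem radInv_mem_Ico {p : ℕ} (hp : 2 ≤ p) (k : ℕ) : radInv p k ∈ Set.Ico 0 1 := by
  induction k using Nat.strong_induction_on with
  | _ k ih =>
    rcases Nat.eq_zero_or_pos k with rfl | hk
    · simp [radInv_zero]
    have hdigit : ((k % p : ℕ) : ℝ) + 1 ≤ p := by exact_mod_cast Nat.mod_lt k (by omega)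
    obtain ⟨h₀, h₁⟩ := ih (k / p) (Nat.div_lt_self hk (by omega))
    rw [radInv_eq_mod_add_div hp, Set.mem_Ico, le_div_iff₀ (by positivity),
      div_lt_one (by positivity)]
    constructor <;> linarith

section DigitExpansion

variable {p : ℕ}

theorem sum_range_succ_digit_div_pow (a : ℕ → ℕ) (s : ℕ) :
    ∑ j ∈ range (s + 1), (a (j + 1) : ℝ) / (p : ℝ) ^ (j + 1)
      = (a 1 + ∑ j ∈ range s, (a (j + 2) : ℝ) / (p : ℝ) ^ (j + 1)) / p := by
  rw [sum_range_succ', add_comm, add_div, sum_div]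
  simp only [pow_succ, pow_zero, one_mul, div_div]

theorem sum_range_succ_digit_mul_pow (a : ℕ → ℕ) (s : ℕ) :
    ∑ j ∈ range (s + 1), a (j + 1) * p ^ j = a 1 + p * ∑ j ∈ range s, a (j + 2) * p ^ j := by
  rw [sum_range_succ', add_comm, mul_sum]
  simp only [pow_succ, pow_zero, mul_one]
  congr 1
  exact sum_congr rfl fun j _ => by ring

theorem sum_digit_div_pow_add_inv_pow_le_one (hp : 0 < p) {a : ℕ → ℕ} (ha : ∀ j, a j < p)
    (s : ℕ) : ∑ j ∈ range s, (a (j + 1) : ℝ) / (p : ℝ) ^ (j + 1) + ((p : ℝ) ^ s)⁻¹ ≤ 1 := by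
  induction s generalizing a with
  | zero => simp
  | succ s ih =>
    have hpR : (0 : ℝ) < p := by exact_mod_cast hp
    have hdigit : (a 1 : ℝ) + 1 ≤ p := by exact_mod_cast ha 1
    have htail := ih (a := fun j => a (j + 1)) fun j => ha _
    rw [sum_range_succ_digit_div_pow, pow_succ', mul_inv, ← div_eq_inv_mul, ← add_div,
      div_le_one hpR]
    linarith

theorem radInv_mem_Ico_iff_modEq (hp : 2 ≤ p) {a : ℕ → ℕ} (ha : ∀ j, a j < p) (s k : ℕ) :
    radInv p k ∈ Set.Ico (∑ j ∈ range s, (a (j + 1) : ℝ) / (p : ℝ) ^ (j + 1))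
        (∑ j ∈ range s, (a (j + 1) : ℝ) / (p : ℝ) ^ (j + 1) + ((p : ℝ) ^ s)⁻¹) ↔
      k ≡ ∑ j ∈ range s, a (j + 1) * p ^ j [MOD p ^ s] := by
  induction s generalizing a k with
  | zero => simpa [Nat.modEq_one] using radInv_mem_Ico hp k
  | succ s ih =>
    have hpR : (0 : ℝ) < p := by positivity
    obtain ⟨hr₀, hr₁⟩ := radInv_mem_Ico hp (k / p)
    have htail := sum_digit_div_pow_add_inv_pow_le_one (by omega) (a := fun j => a (j + 1))
      (fun j => ha _) s
    rw [sum_range_succ_digit_div_pow, sum_range_succ_digit_mul_pow, pow_succ', pow_succ',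
      Nat.modEq_add_mul_iff (ha 1), ← ih (fun j => ha (j + 1)), radInv_eq_mod_add_div hp,
      mul_inv, ← div_eq_inv_mul, ← add_div, Set.mem_Ico, div_le_div_iff_of_pos_right hpR,
      div_lt_div_iff_of_pos_right hpR, ← Set.mem_Ico]
    exact natCast_add_mem_Ico_add_iff hr₀ hr₁ (by positivity) (by simpa using htail)

end DigitExpansion

theorem stmt1_general (p₁ p₂ : ℕ) (hp₁ : 2 ≤ p₁) (hp₂ : 2 ≤ p₂) (hcop : Nat.Coprime p₁ p₂)
    (s₁ s₂ : ℕ)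
    (yd₁ yd₂ : ℕ → ℕ) (hyd₁ : ∀ j, yd₁ j < p₁) (hyd₂ : ∀ j, yd₂ j < p₂)
    (y₁ y₂ : ℝ)
    (hy₁ : y₁ = ∑ j ∈ Finset.range s₁, (yd₁ (j + 1) : ℝ) / (p₁ : ℝ) ^ (j + 1))
    (hy₂ : y₂ = ∑ j ∈ Finset.range s₂, (yd₂ (j + 1) : ℝ) / (p₂ : ℝ) ^ (j + 1))
    (k₁ k₂ : ℕ)
    (hk₁ : k₁ = ∑ j ∈ Finset.range s₁, yd₁ (j + 1) * p₁ ^ j)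
    (hk₂ : k₂ = ∑ j ∈ Finset.range s₂, yd₂ (j + 1) * p₂ ^ j)
    (M₁ M₂ : ℕ)
    (hM₁ : p₂ ^ s₂ * M₁ ≡ 1 [MOD p₁ ^ s₁]) (hM₂ : p₁ ^ s₁ * M₂ ≡ 1 [MOD p₂ ^ s₂]) :
    ∀ k : ℕ,
      (radInv p₁ k ∈ Set.Ico y₁ (y₁ + ((p₁ : ℝ) ^ s₁)⁻¹) ∧
       radInv p₂ k ∈ Set.Ico y₂ (y₂ + ((p₂ : ℝ) ^ s₂)⁻¹)) ↔
      k ≡ p₂ ^ s₂ * M₁ * k₁ + p₁ ^ s₁ * M₂ * k₂ [MOD p₁ ^ s₁ * p₂ ^ s₂] := by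
  intro k
  subst hy₁ hy₂ hk₁ hk₂
  rw [radInv_mem_Ico_iff_modEq hp₁ hyd₁, radInv_mem_Ico_iff_modEq hp₂ hyd₂]
  exact Nat.modEq_and_modEq_iff_modEq_crt (Nat.Coprime.pow s₁ s₂ hcop) hM₁ hM₂

theorem stmt1 (p₁ p₂ : ℕ) (hp₁ : 2 ≤ p₁) (hp₂ : 2 ≤ p₂) (hcop : Nat.Coprime p₁ p₂)
    (s₁ s₂ : ℕ) (hs₁ : 1 ≤ s₁) (hs₂ : 1 ≤ s₂)
    (yd₁ yd₂ : ℕ → ℕ) (hyd₁ : ∀ j, yd₁ j < p₁) (hyd₂ : ∀ j, yd₂ j < p₂)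
    (y₁ y₂ : ℝ)
    (hy₁ : y₁ = ∑ j ∈ Finset.range s₁, (yd₁ (j + 1) : ℝ) / (p₁ : ℝ) ^ (j + 1))
    (hy₂ : y₂ = ∑ j ∈ Finset.range s₂, (yd₂ (j + 1) : ℝ) / (p₂ : ℝ) ^ (j + 1))
    (k₁ k₂ : ℕ)
    (hk₁ : k₁ = ∑ j ∈ Finset.range s₁, yd₁ (j + 1) * p₁ ^ j)
    (hk₂ : k₂ = ∑ j ∈ Finset.range s₂, yd₂ (j + 1) * p₂ ^ j)
    (M₁ M₂ : ℕ) (hM₁r : M₁ < p₁ ^ s₁) (hM₂r : M₂ < p₂ ^ s₂)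
    (hM₁ : p₂ ^ s₂ * M₁ ≡ 1 [MOD p₁ ^ s₁]) (hM₂ : p₁ ^ s₁ * M₂ ≡ 1 [MOD p₂ ^ s₂]) :
    ∀ k : ℕ,
      (radInv p₁ k ∈ Set.Ico y₁ (y₁ + ((p₁ : ℝ) ^ s₁)⁻¹) ∧
       radInv p₂ k ∈ Set.Ico y₂ (y₂ + ((p₂ : ℝ) ^ s₂)⁻¹)) ↔
      k ≡ p₂ ^ s₂ * M₁ * k₁ + p₁ ^ s₁ * M₂ * k₂ [MOD p₁ ^ s₁ * p₂ ^ s₂] :=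
  stmt1_general p₁ p₂ hp₁ hp₂ hcop s₁ s₂ yd₁ yd₂ hyd₁ hyd₂ y₁ y₂ hy₁ hy₂ k₁ k₂ hk₁ hk₂ M₁ M₂ hM₁ hM₂
end

section
/- Let p be a prime, and let integers r₀ < r₁ ≤ r₂ (with r₁ ≥ r₀ + 2) and integers a₁ ∈ I_{p^{r₁-r₀}}, a₂ ∈ I_{p^{r₂-r₁}} be given, where I_M = [-⌊(M-1)/2⌋, ⌊M/2⌋] ∩ ℤ. Suppose |a₁| > 8. Then the distance to the nearest integer of (a₁ p^{r₂-r₁} + a₂) / p^{r₂-r₀} satisfies ⟨(a₁ p^{r₂-r₁} + a₂)/p^{r₂-r₀}⟩ ≥ (|a₁|/2) / p^{r₁-r₀}. -/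
/-!
Write `x = (a₁ N₂ + a₂) / (N₁ N₂)` with `N₁ = p ^ (r₁ - r₀)`, `N₂ = p ^ (r₂ - r₁)`. Since `a₂` is a
centered residue, `|a₂| ≤ N₂ / 2`, so the numerator is `a₁ N₂` up to an error of at most half of
`N₂`; as `1 ≤ |a₁| ≤ N₁ / 2` this traps `|x|` in `[c, 1 - c]` with `c = |a₁| / (2 N₁)`, and every
point of that range is at distance at least `c` from every integer.
-/

theorem two_mul_abs_le_of_mem_Icc {a M : ℤ} (h : a ∈ Finset.Icc (-((M - 1) / 2)) (M / 2)) :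
    2 * |a| ≤ M := by
  obtain ⟨hl, hr⟩ := Finset.mem_Icc.mp h
  rcases abs_cases a with ⟨habs, _⟩ | ⟨habs, _⟩ <;> omega

theorem le_abs_sub_intCast_of_le_abs {α : Type*} [CommRing α] [LinearOrder α]
    [IsStrictOrderedRing α] {x c : α} (hc : c ≤ |x|) (hx : |x| ≤ 1 - c) (n : ℤ) : c ≤ |x - n| := by
  rcases eq_or_ne n 0 with rfl | hn
  · simpa using hc
  · have hn1 : (1 : α) ≤ |(n : α)| := by exact_mod_cast Int.one_le_abs hn
    calc c ≤ |(n : α)| - |x| := by linarith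
      _ ≤ |x - n| := by rw [abs_sub_comm]; exact abs_sub_abs_le_abs_sub _ _

section DigitBounds

variable {K : Type*} [Field K] [LinearOrder K] [IsStrictOrderedRing K] {a b M N : K}

theorem abs_div_two_div_le_abs_mul_add_div (hN : 0 < N) (ha : 1 ≤ |a|) (haM : 2 * |a| ≤ M)
    (hbN : 2 * |b| ≤ N) : |a| / 2 / M ≤ |(a * N + b) / (M * N)| := by
  have hM : 0 < M := by linarith
  have hlow : |a| * N - |b| ≤ |a * N + b| := by
    simpa [abs_mul, abs_of_pos hN] using abs_sub_abs_le_abs_add (a * N) b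
  rw [abs_div, abs_of_pos (mul_pos hM hN), div_div,
    div_le_div_iff₀ (by positivity) (by positivity)]
  nlinarith [mul_le_mul_of_nonneg_left hlow hM.le,
    mul_nonneg (sub_nonneg.mpr ha) (mul_pos hM hN).le]

theorem abs_mul_add_div_le_one_sub (hN : 0 < N) (ha : 1 ≤ |a|) (haM : 2 * |a| ≤ M)
    (hbN : 2 * |b| ≤ N) : |(a * N + b) / (M * N)| ≤ 1 - |a| / 2 / M := by
  have hM : 0 < M := by linarith
  have hup : |a * N + b| ≤ |a| * N + |b| := by
    simpa [abs_mul, abs_of_pos hN] using abs_add_le (a * N) b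
  rw [abs_div, abs_of_pos (mul_pos hM hN), div_le_iff₀ (mul_pos hM hN), sub_mul, one_mul,
    show |a| / 2 / M * (M * N) = |a| * N / 2 by field_simp]
  nlinarith

end DigitBounds

theorem stmt5 (p : ℕ) (hp : p.Prime) (r₀ r₁ r₂ : ℕ)
    (h01 : r₀ + 2 ≤ r₁) (h12 : r₁ ≤ r₂) (a₁ a₂ : ℤ)
    (ha₁ : a₁ ∈ Finset.Icc (-(((p : ℤ) ^ (r₁ - r₀) - 1) / 2)) ((p : ℤ) ^ (r₁ - r₀) / 2))
    (ha₂ : a₂ ∈ Finset.Icc (-(((p : ℤ) ^ (r₂ - r₁) - 1) / 2)) ((p : ℤ) ^ (r₂ - r₁) / 2))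
    (ha : 8 < |a₁|) :
    (((|a₁| : ℤ) : ℝ) / 2) / (p : ℝ) ^ (r₁ - r₀) ≤
      min (Int.fract (((a₁ * (p : ℤ) ^ (r₂ - r₁) + a₂ : ℤ) : ℝ) / (p : ℝ) ^ (r₂ - r₀)))
        (1 - Int.fract (((a₁ * (p : ℤ) ^ (r₂ - r₁) + a₂ : ℤ) : ℝ) / (p : ℝ) ^ (r₂ - r₀))) := by
  have hN₂ : (0 : ℝ) < (p : ℝ) ^ (r₂ - r₁) := pow_pos (by exact_mod_cast hp.pos) _
  have ha₁1 : (1 : ℝ) ≤ |(a₁ : ℝ)| := by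
    rw [← Int.cast_abs]; exact_mod_cast (by linarith : (1 : ℤ) ≤ |a₁|)
  have ha₁N : 2 * |(a₁ : ℝ)| ≤ (p : ℝ) ^ (r₁ - r₀) := by
    rw [← Int.cast_abs]; exact_mod_cast two_mul_abs_le_of_mem_Icc ha₁
  have ha₂N : 2 * |(a₂ : ℝ)| ≤ (p : ℝ) ^ (r₂ - r₁) := by
    rw [← Int.cast_abs]; exact_mod_cast two_mul_abs_le_of_mem_Icc ha₂
  have hexp : (p : ℝ) ^ (r₂ - r₀) = (p : ℝ) ^ (r₁ - r₀) * (p : ℝ) ^ (r₂ - r₁) := by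
    rw [← pow_add]; congr 1; omega
  rw [← abs_sub_round_eq_min, hexp, Int.cast_abs]
  push_cast
  exact le_abs_sub_intCast_of_le_abs (abs_div_two_div_le_abs_mul_add_div hN₂ ha₁1 ha₁N ha₂N)
    (abs_mul_add_div_le_one_sub hN₂ ha₁1 ha₁N ha₂N) _
end

section
/- Let p₁ ≠ p₂ be primes, H₂(k) = (φ_{p₁}(k), φ_{p₂}(k)) the 2-dimensional Halton sequence, Q ≥ 0, N ≥ 2 integers, n = ⌊log₂ N⌋ + 1, and for x ∈ [0,1)² let [x]_{(n,n)} be the coordinatewise truncation of x to n base-p_i digits. Then the truncated local discrepancy function 𝒮(x) = D([x]_{(n,n)}, (H₂(k))_{k=Q}^{Q+N-1}) satisfies |𝒮(x) − D(x, (H₂(k))_{k=Q}^{Q+N-1})| ≤ 2 for all x ∈ [0,1)², where D(x, P_N) = Σ_{k} 1_{[0,x₁)×[0,x₂)}(H₂(k)) − N x₁ x₂. -/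
open scoped Classical

section Counting

variable {α β : Type*} [LinearOrder β] (s : Finset α) (f g : α → β)

lemma card_filter_lt_and_lt_mono {t₁ t₂ x₁ x₂ : β} (h₁ : t₁ ≤ x₁) (h₂ : t₂ ≤ x₂) :
    (s.filter fun k => f k < t₁ ∧ g k < t₂).card ≤ (s.filter fun k => f k < x₁ ∧ g k < x₂).card :=
  Finset.card_le_card <| Finset.monotone_filter_right _ fun _ _ hk =>
    ⟨hk.1.trans_le h₁, hk.2.trans_le h₂⟩

lemma card_filter_lt_and_lt_le (t₁ t₂ x₁ x₂ : β) :
    (s.filter fun k => f k < x₁ ∧ g k < x₂).card ≤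
      (s.filter fun k => f k < t₁ ∧ g k < t₂).card + (s.filter fun k => f k ∈ Set.Ico t₁ x₁).card
        + (s.filter fun k => g k ∈ Set.Ico t₂ x₂).card := by
  calc _ ≤ ((s.filter fun k => f k < t₁ ∧ g k < t₂) ∪ (s.filter fun k => f k ∈ Set.Ico t₁ x₁) ∪
        (s.filter fun k => g k ∈ Set.Ico t₂ x₂)).card := Finset.card_le_card fun k hk => ?_
    _ ≤ _ := (Finset.card_union_le _ _).trans (Nat.add_le_add_right (Finset.card_union_le _ _) _)
  simp only [Finset.mem_filter, Finset.mem_union, Set.mem_Ico] at hk ⊢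
  obtain ⟨hks, hf, hg⟩ := hk
  by_cases hft : f k < t₁
  · by_cases hgt : g k < t₂
    · exact Or.inl (Or.inl ⟨hks, hft, hgt⟩)
    · exact Or.inr ⟨hks, not_lt.1 hgt, hg⟩
  · exact Or.inl (Or.inr ⟨hks, not_lt.1 hft, hf⟩)

end Counting

lemma mul_mul_sub_mul_mul_mem_Icc {R : Type*} [CommRing R] [LinearOrder R] [IsStrictOrderedRing R]
    {c t₁ t₂ x₁ x₂ : R} (hc : 0 ≤ c) (ht₁ : 0 ≤ t₁) (ht₂ : 0 ≤ t₂)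
    (h₁ : t₁ ≤ x₁) (h₂ : t₂ ≤ x₂) (hx₁ : x₁ ≤ 1) (hx₂ : x₂ ≤ 1) (hc₁ : c * (x₁ - t₁) ≤ 1)
    (hc₂ : c * (x₂ - t₂) ≤ 1) :
    c * x₁ * x₂ - c * t₁ * t₂ ∈ Set.Icc 0 2 := by
  have hsplit : c * x₁ * x₂ - c * t₁ * t₂ = c * (x₁ - t₁) * x₂ + c * (x₂ - t₂) * t₁ := by ring
  have hd₁ : 0 ≤ c * (x₁ - t₁) := mul_nonneg hc (sub_nonneg.2 h₁)
  have hd₂ : 0 ≤ c * (x₂ - t₂) := mul_nonneg hc (sub_nonneg.2 h₂)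
  rw [hsplit]
  constructor
  · exact add_nonneg (mul_nonneg hd₁ (ht₂.trans h₂)) (mul_nonneg hd₂ ht₁)
  · nlinarith [mul_le_one₀ hc₁ (ht₂.trans h₂) hx₂, mul_le_one₀ hc₂ ht₁ (h₁.trans hx₁)]

section Truncation

variable {K : Type*} [Field K] [LinearOrder K] [IsStrictOrderedRing K] [FloorRing K]

lemma floor_mul_div_nonneg {x P : K} (hx : 0 ≤ x) (hP : 0 ≤ P) : 0 ≤ (⌊x * P⌋ : K) / P :=
  div_nonneg (by exact_mod_cast Int.floor_nonneg.2 (mul_nonneg hx hP)) hP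

lemma floor_mul_div_le {x P : K} (hP : 0 < P) : (⌊x * P⌋ : K) / P ≤ x :=
  (div_le_iff₀ hP).2 (Int.floor_le _)

lemma mul_sub_floor_mul_div_le_one {x P c : K} (hP : 0 < P) (hcP : c ≤ P) :
    c * (x - ⌊x * P⌋ / P) ≤ 1 := by
  have hfract : (x - ⌊x * P⌋ / P) * P = Int.fract (x * P) := by
    rw [← Int.self_sub_floor]; field_simp
  have hnonneg : 0 ≤ x - ⌊x * P⌋ / P := sub_nonneg.2 (floor_mul_div_le hP)
  nlinarith [Int.fract_lt_one (x * P), mul_le_mul_of_nonneg_left hcP hnonneg]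

lemma floor_mul_eq_of_floor_div_le_of_lt {x y P : K} (hP : 0 < P) (h₁ : ⌊x * P⌋ / P ≤ y)
    (h₂ : y < x) : ⌊y * P⌋ = ⌊x * P⌋ :=
  Int.floor_eq_iff.2 ⟨(div_le_iff₀ hP).1 h₁,
    (mul_lt_mul_of_pos_right h₂ hP).trans (Int.lt_floor_add_one _)⟩

end Truncation

lemma radInv_nonneg (p k : ℕ) : 0 ≤ radInv p k :=
  Finset.sum_nonneg fun _ _ => by positivity

lemma radInv_mul_eq_mod_add_radInv_div {p : ℕ} (hp : 1 < p) (k : ℕ) :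
    radInv p k * p = (k % p : ℕ) + radInv p (k / p) := by
  rcases Nat.eq_zero_or_pos k with rfl | hk
  · simp [radInv]
  have hp0 : (p : ℝ) ≠ 0 := by positivity
  unfold radInv
  rw [Nat.digits_def' hp hk, List.length_cons, Finset.sum_range_succ', add_mul, Finset.sum_mul,
    add_comm]
  simp only [List.getD_cons_succ, List.getD_cons_zero, zero_add, pow_one, div_mul_cancel₀ _ hp0]
  congr 1
  refine Finset.sum_congr rfl fun i _ => ?_
  rw [pow_succ, ← div_div, div_mul_cancel₀ _ hp0]

lemma radInv_lt_one {p : ℕ} (hp : 1 < p) (k : ℕ) : radInv p k < 1 := by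
  induction k using Nat.strong_induction_on with
  | _ k ih =>
    rcases Nat.eq_zero_or_pos k with rfl | hk
    · simp [radInv]
    have hdigit : ((k % p : ℕ) : ℝ) + 1 ≤ p := by exact_mod_cast Nat.mod_lt k (by omega)
    have hrest := ih (k / p) (Nat.div_lt_self hk (by omega))
    have hp0 : (0 : ℝ) < p := by positivity
    nlinarith [radInv_mul_eq_mod_add_radInv_div hp k]

lemma floor_radInv_mul_pow_lt {p : ℕ} (hp : 1 < p) (n k : ℕ) : ⌊radInv p k * p ^ n⌋₊ < p ^ n := by
  rw [Nat.floor_lt (by have := radInv_nonneg p k; positivity)]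
  push_cast
  exact mul_lt_of_lt_one_left (by positivity) (radInv_lt_one hp k)

lemma floor_radInv_mul_pow_succ {p : ℕ} (hp : 1 < p) (n k : ℕ) :
    ⌊radInv p k * p ^ (n + 1)⌋₊ = k % p * p ^ n + ⌊radInv p (k / p) * p ^ n⌋₊ := by
  rw [pow_succ', ← mul_assoc, radInv_mul_eq_mod_add_radInv_div hp, add_mul, add_comm,
    ← Nat.cast_pow, ← Nat.cast_mul, Nat.floor_add_natCast (by positivity [radInv_nonneg p (k / p)]),
    add_comm, Nat.cast_pow]

lemma modEq_of_floor_radInv_mul_pow_eq {p : ℕ} (hp : 1 < p) {n k a : ℕ}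
    (h : ⌊radInv p k * p ^ n⌋₊ = ⌊radInv p a * p ^ n⌋₊) : k ≡ a [MOD p ^ n] := by
  induction n generalizing k a with
  | zero => simp [Nat.ModEq, Nat.mod_one]
  | succ n ih =>
    rw [floor_radInv_mul_pow_succ hp, floor_radInv_mul_pow_succ hp] at h
    have hP : 0 < p ^ n := by positivity
    have hsplit : ∀ r s, s < p ^ n → (r * p ^ n + s) / p ^ n = r ∧ (r * p ^ n + s) % p ^ n = s :=
      fun r s hs => (Nat.div_mod_unique hP).2 ⟨by ring, hs⟩
    have hk := hsplit (k % p) _ (floor_radInv_mul_pow_lt hp n (k / p))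
    have ha := hsplit (a % p) _ (floor_radInv_mul_pow_lt hp n (a / p))
    rw [h] at hk
    have hmod : k % p = a % p := hk.1.symm.trans ha.1
    have hdiv : k / p ≡ a / p [MOD p ^ n] := ih (hk.2.symm.trans ha.2)
    unfold Nat.ModEq at hdiv ⊢
    rw [pow_succ', Nat.mod_mul, Nat.mod_mul, hmod, hdiv]

lemma card_filter_radInv_mem_Ico_le_one {p : ℕ} (hp : 1 < p) {N n : ℕ} (hN : N ≤ p ^ n)
    (Q : ℕ) (x : ℝ) :
    ((Finset.Ico Q (Q + N)).filter fun k =>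
      radInv p k ∈ Set.Ico (⌊x * (p : ℝ) ^ n⌋ / (p : ℝ) ^ n) x).card ≤ 1 := by
  refine Finset.card_le_one.2 fun a ha b hb => ?_
  simp only [Finset.mem_filter, Finset.mem_Ico, Set.mem_Ico] at ha hb
  have hP : (0 : ℝ) < (p : ℝ) ^ n := by positivity
  have hfloor : ⌊radInv p a * (p : ℝ) ^ n⌋₊ = ⌊radInv p b * (p : ℝ) ^ n⌋₊ := by
    rw [← Int.floor_toNat, ← Int.floor_toNat,
      floor_mul_eq_of_floor_div_le_of_lt hP ha.2.1 ha.2.2,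
      floor_mul_eq_of_floor_div_le_of_lt hP hb.2.1 hb.2.2]
  refine (modEq_of_floor_radInv_mul_pow_eq hp hfloor).eq_of_abs_lt ?_
  have hN' : (N : ℤ) ≤ (p : ℤ) ^ n := by exact_mod_cast hN
  rw [abs_sub_lt_iff]
  push_cast
  omega

theorem stmt10_general (p₁ p₂ : ℕ) (hp₁ : p₁.Prime) (hp₂ : p₂.Prime)
    (Q N : ℕ) (n : ℕ) (hn : n = Nat.log 2 N + 1) :
    ∀ x₁ x₂ : ℝ, x₁ ∈ Set.Ico (0 : ℝ) 1 → x₂ ∈ Set.Ico (0 : ℝ) 1 →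
      abs
        (((((Finset.Ico Q (Q + N)).filter fun k =>
              radInv p₁ k < ((⌊x₁ * (p₁ : ℝ) ^ n⌋ : ℤ) : ℝ) / (p₁ : ℝ) ^ n ∧
              radInv p₂ k < ((⌊x₂ * (p₂ : ℝ) ^ n⌋ : ℤ) : ℝ) / (p₂ : ℝ) ^ n).card : ℝ)
            - (N : ℝ) * (((⌊x₁ * (p₁ : ℝ) ^ n⌋ : ℤ) : ℝ) / (p₁ : ℝ) ^ n)
                * (((⌊x₂ * (p₂ : ℝ) ^ n⌋ : ℤ) : ℝ) / (p₂ : ℝ) ^ n))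
          - ((((Finset.Ico Q (Q + N)).filter fun k =>
              radInv p₁ k < x₁ ∧ radInv p₂ k < x₂).card : ℝ)
            - (N : ℝ) * x₁ * x₂)) ≤ 2 := by
  rintro x₁ x₂ ⟨hx₁, hx₁'⟩ ⟨hx₂, hx₂'⟩
  have hN : ∀ {p : ℕ}, p.Prime → N ≤ p ^ n := fun hp => by
    subst hn
    exact (Nat.lt_pow_succ_log_self one_lt_two N).le.trans (Nat.pow_le_pow_left hp.two_le _)
  have hP : ∀ {p : ℕ}, p.Prime → (0 : ℝ) < (p : ℝ) ^ n := fun hp => by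
    have := hp.pos; positivity
  have hNP : ∀ {p : ℕ}, p.Prime → (N : ℝ) ≤ (p : ℝ) ^ n := fun hp => by exact_mod_cast hN hp
  have ht₁ := floor_mul_div_le (x := x₁) (hP hp₁)
  have ht₂ := floor_mul_div_le (x := x₂) (hP hp₂)
  have hcount_le : (_ : ℝ) ≤ _ := Nat.cast_le.2 <|
    (card_filter_lt_and_lt_le (Finset.Ico Q (Q + N)) (radInv p₁) (radInv p₂) _ _ x₁ x₂).trans
      (add_le_add (add_le_add le_rfl (card_filter_radInv_mem_Ico_le_one hp₁.one_lt (hN hp₁) Q x₁))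
        (card_filter_radInv_mem_Ico_le_one hp₂.one_lt (hN hp₂) Q x₂))
  push_cast at hcount_le
  have hcount_ge : (_ : ℝ) ≤ _ :=
    Nat.cast_le.2 (card_filter_lt_and_lt_mono (Finset.Ico Q (Q + N)) (radInv p₁) (radInv p₂) ht₁ ht₂)
  have hvol := mul_mul_sub_mul_mul_mem_Icc (N.cast_nonneg (α := ℝ))
    (floor_mul_div_nonneg hx₁ (hP hp₁).le) (floor_mul_div_nonneg hx₂ (hP hp₂).le) ht₁ ht₂
    hx₁'.le hx₂'.le (mul_sub_floor_mul_div_le_one (hP hp₁) (hNP hp₁))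
    (mul_sub_floor_mul_div_le_one (hP hp₂) (hNP hp₂))
  rw [abs_le]
  constructor <;> linarith [hvol.1, hvol.2]

theorem stmt10 (p₁ p₂ : ℕ) (hp₁ : p₁.Prime) (hp₂ : p₂.Prime) (hne : p₁ ≠ p₂)
    (Q N : ℕ) (hN : 2 ≤ N) (n : ℕ) (hn : n = Nat.log 2 N + 1) :
    ∀ x₁ x₂ : ℝ, x₁ ∈ Set.Ico (0 : ℝ) 1 → x₂ ∈ Set.Ico (0 : ℝ) 1 →
      abs
        (((((Finset.Ico Q (Q + N)).filter fun k =>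
              radInv p₁ k < ((⌊x₁ * (p₁ : ℝ) ^ n⌋ : ℤ) : ℝ) / (p₁ : ℝ) ^ n ∧
              radInv p₂ k < ((⌊x₂ * (p₂ : ℝ) ^ n⌋ : ℤ) : ℝ) / (p₂ : ℝ) ^ n).card : ℝ)
            - (N : ℝ) * (((⌊x₁ * (p₁ : ℝ) ^ n⌋ : ℤ) : ℝ) / (p₁ : ℝ) ^ n)
                * (((⌊x₂ * (p₂ : ℝ) ^ n⌋ : ℤ) : ℝ) / (p₂ : ℝ) ^ n))
          - ((((Finset.Ico Q (Q + N)).filter fun k =>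
              radInv p₁ k < x₁ ∧ radInv p₂ k < x₂).card : ℝ)
            - (N : ℝ) * x₁ * x₂)) ≤ 2 :=
  stmt10_general p₁ p₂ hp₁ hp₂ Q N n hn
end

section
/- Let p₁ ≠ p₂ be primes, r = (r₁,r₂), P_r = p₁^{r₁}p₂^{r₂}. With 𝒟_{r,N}(x) as in the truncated discrepancy decomposition, one has the finite Fourier expansion 𝒟_{r,N}(x) = Σ_{m ∈ I*_{P_r}} φ_{r,Q,N,m} ψ_r(m,x) e(−m X_r / P_r), where φ_{r,Q,N,m} = (1/P_r) Σ_{k=Q}^{Q+N−1} e(mk/P_r), ψ_r(m,x) = Π_{i=1}^2 Σ_{b_i=0}^{x_{i,r_i}−1} e(−m M_{i,r}(b_i − x_{i,r_i})/p_i), and X_r ∈ [0,P_r) is determined by X_r ≡ p₂^{r₂}M_{1,r}X_{1,r₁} + p₁^{r₁}M_{2,r}X_{2,r₂} mod P_r with X_{i,r_i} = Σ_{1≤j≤r_i} x_{i,j} p_i^{j−1}. Moreover |φ_{r,Q,N,m}| ≤ 1/max(1,|m|) and |ψ_r(m,x)| ≤ p₁p₂. -/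
/-!
Expand the indicator of `P ∣ k - X_b` in the additive characters `e(m · / P)`, with `m` running
over the window `I*_P` of `P` consecutive integers (the term `m = 0` cancels the `-1/P`).
Replacing the last digits `x_{i,r_i}` by `b_i` moves `X` by `Σ_i M_i (P / p_i) (b_i - x_{i,r_i})`
modulo `P`, so the phase `e(m (k - X_b) / P)` splits into a factor depending on `k`, one
depending on each `b_i`, and `e(-m X / P)`; the triple sum then factorizes. The bound on `φ` is
the geometric-series estimate `|Σ_k e(kθ)| ≤ 2 / |e(θ) - 1| = 1 / |sin πθ|` combined with Jordan's
inequality `sin πθ ≥ 2θ` on `[0, 1/2]`; `ψ` is a product of two sums of fewer than `p_i`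
unimodular terms.
-/

open Finset

local notation "𝐞" x:max => Complex.exp (2 * (Real.pi : ℂ) * Complex.I * x)

lemma e_add (x y : ℂ) : 𝐞 (x + y) = 𝐞 x * 𝐞 y := by
  rw [mul_add, Complex.exp_add]

lemma e_intCast_div_eq_zpow {P : ℕ} (m : ℤ) :
    𝐞 ((m : ℂ) / P) = Complex.exp (2 * Real.pi * Complex.I / P) ^ m := by
  rw [← Complex.exp_int_mul]; ring_nf

lemma e_intCast (n : ℤ) : 𝐞 (n : ℂ) = 1 := by
  rw [mul_comm, Complex.exp_int_mul_two_pi_mul_I]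

lemma norm_e_of_im_eq_zero {x : ℂ} (hx : x.im = 0) : ‖𝐞 x‖ = 1 := by
  simp [Complex.norm_exp, hx]

lemma sum_Ico_e_mul_div {P : ℕ} (hP : P ≠ 0) (a n : ℤ) :
    ∑ m ∈ Ico a (a + P), 𝐞 ((m : ℂ) * n / P) = if (P : ℤ) ∣ n then (P : ℂ) else 0 := by
  have hζ := Complex.isPrimitiveRoot_exp P hP
  set w := Complex.exp (2 * Real.pi * Complex.I / P) ^ n
  have hw0 : w ≠ 0 := zpow_ne_zero _ (Complex.exp_ne_zero _)
  have hterm (m : ℤ) : 𝐞 ((m : ℂ) * n / P) = w ^ m := by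
    rw [← zpow_mul, mul_comm, ← e_intCast_div_eq_zpow]; push_cast; ring_nf
  rw [Int.Ico_eq_finset_map, sum_map]
  simp only [hterm, Function.Embedding.trans_apply, Nat.castEmbedding_apply,
    addLeftEmbedding_apply, zpow_add₀ hw0, zpow_natCast, ← mul_sum, add_sub_cancel_left,
    Int.toNat_natCast]
  split_ifs with hn
  · have hw : w = 1 := (hζ.zpow_eq_one_iff_dvd n).2 hn
    simp [hw]
  · have hw : w ≠ 1 := mt (hζ.zpow_eq_one_iff_dvd n).1 hn
    have hwP : w ^ P = 1 := by
      rw [← zpow_natCast, ← zpow_mul]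
      exact (hζ.zpow_eq_one_iff_dvd _).2 (dvd_mul_left _ _)
    rw [geom_sum_eq hw, hwP, sub_self, zero_div, mul_zero]

lemma Icc_neg_sub_one_div_two_eq_Ico (P : ℤ) :
    Icc (-((P - 1) / 2)) (P / 2) = Ico (-((P - 1) / 2)) (-((P - 1) / 2) + P) := by
  ext m; simp only [mem_Icc, mem_Ico]; omega

lemma ite_dvd_sub_inv_eq_sum_e {P : ℕ} (hP : P ≠ 0) (n : ℤ) :
    (if (P : ℤ) ∣ n then (1 : ℂ) else 0) - 1 / P
      = 1 / P * ∑ m ∈ (Icc (-(((P : ℤ) - 1) / 2)) ((P : ℤ) / 2)).erase 0,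
          𝐞 ((m : ℂ) * n / P) := by
  have h0 : (0 : ℤ) ∈ Icc (-(((P : ℤ) - 1) / 2)) ((P : ℤ) / 2) := by simp only [mem_Icc]; omega
  rw [sum_erase_eq_sub h0, Icc_neg_sub_one_div_two_eq_Ico, sum_Ico_e_mul_div hP]
  have hPC : (P : ℂ) ≠ 0 := Nat.cast_ne_zero.2 hP
  split_ifs <;> field_simp <;> simp

lemma e_mul_div_eq_of_modEq {P : ℕ} (hP : P ≠ 0) {a b : ℤ} (h : a ≡ b [ZMOD P]) (m : ℤ) :
    𝐞 ((m : ℂ) * a / P) = 𝐞 ((m : ℂ) * b / P) := by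
  obtain ⟨t, ht⟩ := h.dvd
  have hPC : (P : ℂ) ≠ 0 := Nat.cast_ne_zero.2 hP
  have : (m : ℂ) * a / P = m * b / P + ((-(m * t) : ℤ) : ℂ) := by
    rw [show a = b - P * t by omega]; push_cast; field_simp; ring
  rw [this, e_add, e_intCast, mul_one]

lemma mul_sum_digits_update_last (c p b : ℤ) (d : ℕ → ℕ) {r : ℕ} (hr : 1 ≤ r) :
    c * (∑ j ∈ range (r - 1), (d (j + 1) : ℤ) * p ^ j + b * p ^ (r - 1))
      = c * ∑ j ∈ range r, (d (j + 1) : ℤ) * p ^ j + c * p ^ (r - 1) * (b - d r) := by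
  obtain ⟨s, rfl⟩ := Nat.exists_eq_add_of_le' hr
  simp only [sum_range_succ, add_tsub_cancel_right]
  ring

lemma e_mul_sub_div_eq {P p₁ p₂ q₁ q₂ : ℕ} (hP : P ≠ 0) (h₁ : P = p₁ * q₁) (h₂ : P = p₂ * q₂)
    {X Y c₁ c₂ : ℤ} (hXY : Y - X ≡ c₁ * q₁ + c₂ * q₂ [ZMOD P]) (m k : ℤ) :
    𝐞 ((m : ℂ) * ((k - Y : ℤ) : ℂ) / P)
      = 𝐞 ((m : ℂ) * k / P) * (𝐞 (-(m : ℂ) * c₁ / p₁) * 𝐞 (-(m : ℂ) * c₂ / p₂))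
        * 𝐞 (-(m : ℂ) * X / P) := by
  have hkY : k - Y ≡ k - X - (c₁ * q₁ + c₂ * q₂) [ZMOD P] := by
    simpa using (Int.ModEq.sub_left (k - X) hXY)
  obtain ⟨hp₁, hq₁⟩ := mul_ne_zero_iff.1 (h₁ ▸ hP)
  obtain ⟨hp₂, hq₂⟩ := mul_ne_zero_iff.1 (h₂ ▸ hP)
  have hP₁ : (P : ℂ) = p₁ * q₁ := by exact_mod_cast h₁
  have hP₂ : (P : ℂ) = p₂ * q₂ := by exact_mod_cast h₂
  have harg : (m : ℂ) * ((k - X - (c₁ * q₁ + c₂ * q₂) : ℤ) : ℂ) / P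
      = m * k / P + (-m * c₁ / p₁ + -m * c₂ / p₂) + -m * X / P := by
    have e₁ : (m : ℂ) * c₁ * q₁ / P = m * c₁ / p₁ := by rw [hP₁]; field_simp
    have e₂ : (m : ℂ) * c₂ * q₂ / P = m * c₂ / p₂ := by rw [hP₂]; field_simp
    push_cast
    linear_combination -e₁ - e₂
  rw [e_mul_div_eq_of_modEq hP hkY, harg, e_add, e_add, e_add]

lemma norm_sum_e_le_card {ι : Type*} (s : Finset ι) {f : ι → ℂ} (hf : ∀ i, (f i).im = 0) :
    ‖∑ i ∈ s, 𝐞 (f i)‖ ≤ #s := by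
  simpa [norm_e_of_im_eq_zero (hf _)] using norm_sum_le s fun i => 𝐞 (f i)

lemma four_mul_abs_le_norm_e_sub_one {x : ℝ} (hx : |x| ≤ 1 / 2) : 4 * |x| ≤ ‖𝐞 (x : ℂ) - 1‖ := by
  have hsin : 2 * |x| ≤ |Real.sin (Real.pi * x)| := by
    have jordan {y : ℝ} (hy₀ : 0 ≤ y) (hy : y ≤ 1 / 2) : 2 * y ≤ Real.sin (Real.pi * y) := by
      calc 2 * y = 2 / Real.pi * (Real.pi * y) := by field_simp
        _ ≤ _ := Real.mul_le_sin (by positivity) (by nlinarith [Real.pi_pos])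
    rcases abs_cases x with ⟨habs, hx₀⟩ | ⟨habs, hx₀⟩ <;> rw [habs] at hx ⊢
    · exact (jordan hx₀ hx).trans (le_abs_self _)
    · have := jordan (by linarith) hx
      simp only [mul_neg, Real.sin_neg] at this
      linarith [neg_le_abs (Real.sin (Real.pi * x))]
  rw [show 2 * (Real.pi : ℂ) * Complex.I * x = Complex.I * ((2 * Real.pi * x : ℝ) : ℂ) by
    push_cast; ring, Complex.norm_exp_I_mul_ofReal_sub_one, Real.norm_eq_abs, abs_mul,
    abs_two, show 2 * Real.pi * x / 2 = Real.pi * x by ring]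
  linarith

lemma norm_geom_sum_Ico_le {z : ℂ} (hz : ‖z‖ = 1) (hz₁ : z ≠ 1) (Q N : ℕ) :
    ‖∑ k ∈ Ico Q (Q + N), z ^ k‖ ≤ 2 / ‖z - 1‖ := by
  rw [geom_sum_Ico hz₁ (Nat.le_add_right Q N), norm_div]
  gcongr
  calc ‖z ^ (Q + N) - z ^ Q‖ ≤ ‖z ^ (Q + N)‖ + ‖z ^ Q‖ := norm_sub_le _ _
    _ = 2 := by rw [norm_pow, norm_pow, hz]; norm_num

lemma norm_sum_Ico_e_le {P : ℕ} {m : ℤ} (hm₀ : m ≠ 0) (hmP : 2 * |m| ≤ P) (Q N : ℕ) :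
    ‖∑ k ∈ Ico Q (Q + N), 𝐞 ((m : ℂ) * k / P)‖ ≤ P / (2 * |(m : ℝ)|) := by
  have hmR : 0 < |(m : ℝ)| := by simpa using hm₀
  have hmPR : 2 * |(m : ℝ)| ≤ P := by exact_mod_cast hmP
  have hPR : (0 : ℝ) < P := by linarith
  set x : ℝ := m / P
  have hx : |x| = |(m : ℝ)| / P := by simp [x, abs_div]
  set z := 𝐞 (x : ℂ)
  have hterm (k : ℕ) : 𝐞 ((m : ℂ) * k / P) = z ^ k := by
    rw [← Complex.exp_nat_mul]; simp only [x]; push_cast; ring_nf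
  have hdist : 4 * (|(m : ℝ)| / P) ≤ ‖z - 1‖ :=
    hx ▸ four_mul_abs_le_norm_e_sub_one (by rw [hx, div_le_iff₀ hPR]; linarith)
  have hz₁ : z ≠ 1 := by
    rintro hz; rw [hz, sub_self, norm_zero] at hdist; have := div_pos hmR hPR; linarith
  simp only [hterm]
  calc _ ≤ 2 / ‖z - 1‖ := norm_geom_sum_Ico_le (norm_e_of_im_eq_zero (by simp)) hz₁ Q N
    _ ≤ 2 / (4 * (|(m : ℝ)| / P)) := by gcongr
    _ = P / (2 * |(m : ℝ)|) := by field_simp; ring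

lemma norm_one_div_mul_sum_Ico_e_le {P : ℕ} {m : ℤ}
    (hm : m ∈ (Icc (-(((P : ℤ) - 1) / 2)) ((P : ℤ) / 2)).erase 0) (Q N : ℕ) :
    ‖1 / (P : ℂ) * ∑ k ∈ Ico Q (Q + N), 𝐞 ((m : ℂ) * k / P)‖ ≤ 1 / ((max 1 |m| : ℤ) : ℝ) := by
  rw [mem_erase, mem_Icc] at hm
  have hmP : 2 * |m| ≤ P := by rcases abs_cases m with ⟨h, _⟩ | ⟨h, _⟩ <;> omega
  have hmR : 0 < |(m : ℝ)| := by simpa using hm.1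
  rw [max_eq_right (Int.one_le_abs hm.1), Int.cast_abs, norm_mul, norm_div, norm_one,
    Complex.norm_natCast]
  have hP : (0 : ℝ) < P := by exact_mod_cast (show 0 < P by omega)
  calc 1 / (P : ℝ) * ‖∑ k ∈ Ico Q (Q + N), 𝐞 ((m : ℂ) * k / P)‖
      ≤ 1 / P * (P / (2 * |(m : ℝ)|)) := by gcongr; exact norm_sum_Ico_e_le hm.1 hmP Q N
    _ = 1 / (2 * |(m : ℝ)|) := by field_simp
    _ ≤ 1 / |(m : ℝ)| := by gcongr; linarith

lemma sum_sum_sum_mul_sum_eq_sum_factor {R ι₁ ι₂ κ μ : Type*} [CommSemiring R]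
    (s : Finset ι₁) (t : Finset ι₂) (u : Finset κ) (S : Finset μ) (c : R) (A : μ → κ → R)
    (B : μ → ι₁ → R) (C : μ → ι₂ → R) (D : μ → R) :
    ∑ b₁ ∈ s, ∑ b₂ ∈ t, ∑ k ∈ u, c * ∑ m ∈ S, A m k * (B m b₁ * C m b₂) * D m
      = ∑ m ∈ S, (c * ∑ k ∈ u, A m k) * ((∑ b₁ ∈ s, B m b₁) * ∑ b₂ ∈ t, C m b₂) * D m := by
  simp only [mul_sum, sum_mul]
  conv_lhs => enter [2, b₁, 2, b₂]; rw [sum_comm]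
  conv_lhs => enter [2, b₁]; rw [sum_comm]
  rw [sum_comm]
  refine sum_congr rfl fun m _ => ?_
  rw [sum_comm]
  exact sum_congr rfl fun _ _ => sum_congr rfl fun _ _ => sum_congr rfl fun _ _ => by ring

theorem stmt11_general (p₁ p₂ : ℕ) (hp₁ : p₁.Prime) (hp₂ : p₂.Prime)
    (r₁ r₂ : ℕ) (hr₁ : 1 ≤ r₁) (hr₂ : 1 ≤ r₂) (Q N : ℕ)
    (d₁ d₂ : ℕ → ℕ) (hd₁ : ∀ j, d₁ j < p₁) (hd₂ : ∀ j, d₂ j < p₂)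
    (M₁ M₂ : ℤ)
    (P : ℕ) (hP : P = p₁ ^ r₁ * p₂ ^ r₂)
    (X : ℤ)
    (hX : X ≡
        M₁ * (p₂ : ℤ) ^ r₂ * (∑ j ∈ Finset.range r₁, (d₁ (j + 1) : ℤ) * (p₁ : ℤ) ^ j)
      + M₂ * (p₁ : ℤ) ^ r₁ * (∑ j ∈ Finset.range r₂, (d₂ (j + 1) : ℤ) * (p₂ : ℤ) ^ j)
        [ZMOD (P : ℤ)])
    (Xb : ℕ → ℕ → ℤ)
    (hXb : ∀ b₁ b₂ : ℕ, Xb b₁ b₂ ≡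
        M₁ * (p₂ : ℤ) ^ r₂ * (∑ j ∈ Finset.range (r₁ - 1), (d₁ (j + 1) : ℤ) * (p₁ : ℤ) ^ j
            + (b₁ : ℤ) * (p₁ : ℤ) ^ (r₁ - 1))
      + M₂ * (p₁ : ℤ) ^ r₁ * (∑ j ∈ Finset.range (r₂ - 1), (d₂ (j + 1) : ℤ) * (p₂ : ℤ) ^ j
            + (b₂ : ℤ) * (p₂ : ℤ) ^ (r₂ - 1)) [ZMOD (P : ℤ)]) :
    (∑ b₁ ∈ Finset.range (d₁ r₁), ∑ b₂ ∈ Finset.range (d₂ r₂), ∑ k ∈ Finset.Ico Q (Q + N),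
        ((if (P : ℤ) ∣ ((k : ℤ) - Xb b₁ b₂) then (1 : ℂ) else 0) - 1 / (P : ℂ)))
      = ∑ m ∈ (Finset.Icc (-(((P : ℤ) - 1) / 2)) ((P : ℤ) / 2)).erase 0,
          ((1 / (P : ℂ)) * ∑ k ∈ Finset.Ico Q (Q + N),
              Complex.exp (2 * (Real.pi : ℂ) * Complex.I * ((m : ℂ) * (k : ℂ) / (P : ℂ))))
          * ((∑ b₁ ∈ Finset.range (d₁ r₁),
                Complex.exp (2 * (Real.pi : ℂ) * Complex.I *
                  (-(m : ℂ) * (M₁ : ℂ) * ((b₁ : ℂ) - (d₁ r₁ : ℂ)) / (p₁ : ℂ))))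
            * (∑ b₂ ∈ Finset.range (d₂ r₂),
                Complex.exp (2 * (Real.pi : ℂ) * Complex.I *
                  (-(m : ℂ) * (M₂ : ℂ) * ((b₂ : ℂ) - (d₂ r₂ : ℂ)) / (p₂ : ℂ)))))
          * Complex.exp (2 * (Real.pi : ℂ) * Complex.I * (-(m : ℂ) * (X : ℂ) / (P : ℂ)))
    ∧ ∀ m ∈ (Finset.Icc (-(((P : ℤ) - 1) / 2)) ((P : ℤ) / 2)).erase 0,
        ‖(1 / (P : ℂ)) * ∑ k ∈ Finset.Ico Q (Q + N),
            Complex.exp (2 * (Real.pi : ℂ) * Complex.I * ((m : ℂ) * (k : ℂ) / (P : ℂ)))‖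
          ≤ 1 / ((max 1 |m| : ℤ) : ℝ)
      ∧ ‖(∑ b₁ ∈ Finset.range (d₁ r₁),
              Complex.exp (2 * (Real.pi : ℂ) * Complex.I *
                (-(m : ℂ) * (M₁ : ℂ) * ((b₁ : ℂ) - (d₁ r₁ : ℂ)) / (p₁ : ℂ))))
          * (∑ b₂ ∈ Finset.range (d₂ r₂),
              Complex.exp (2 * (Real.pi : ℂ) * Complex.I *
                (-(m : ℂ) * (M₂ : ℂ) * ((b₂ : ℂ) - (d₂ r₂ : ℂ)) / (p₂ : ℂ))))‖
          ≤ (p₁ : ℝ) * (p₂ : ℝ) := by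
  have hP₀ : P ≠ 0 := hP ▸ mul_ne_zero (pow_ne_zero _ hp₁.ne_zero) (pow_ne_zero _ hp₂.ne_zero)
  have hphase (m : ℤ) (b₁ b₂ k : ℕ) :
      𝐞 ((m : ℂ) * ((k - Xb b₁ b₂ : ℤ) : ℂ) / P)
        = 𝐞 ((m : ℂ) * k / P)
          * (𝐞 (-(m : ℂ) * M₁ * ((b₁ : ℂ) - d₁ r₁) / p₁)
            * 𝐞 (-(m : ℂ) * M₂ * ((b₂ : ℂ) - d₂ r₂) / p₂))
          * 𝐞 (-(m : ℂ) * X / P) := by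
    have hXY : Xb b₁ b₂ - X ≡ M₁ * ((b₁ : ℤ) - d₁ r₁) * ↑(p₁ ^ (r₁ - 1) * p₂ ^ r₂)
        + M₂ * ((b₂ : ℤ) - d₂ r₂) * ↑(p₂ ^ (r₂ - 1) * p₁ ^ r₁) [ZMOD P] := by
      have := (hXb b₁ b₂).sub hX
      rw [mul_sum_digits_update_last _ _ _ _ hr₁, mul_sum_digits_update_last _ _ _ _ hr₂] at this
      convert this using 2
      push_cast
      ring
    have h₁ : P = p₁ * (p₁ ^ (r₁ - 1) * p₂ ^ r₂) := by
      rw [hP, ← mul_assoc, mul_pow_sub_one (by omega)]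
    have h₂ : P = p₂ * (p₂ ^ (r₂ - 1) * p₁ ^ r₁) := by
      rw [hP, mul_comm, ← mul_assoc, mul_pow_sub_one (by omega)]
    simpa [mul_assoc] using e_mul_sub_div_eq hP₀ h₁ h₂ hXY m k
  refine ⟨?_, fun m hm => ⟨norm_one_div_mul_sum_Ico_e_le hm Q N, ?_⟩⟩
  · simp_rw [ite_dvd_sub_inv_eq_sum_e hP₀, hphase]
    exact sum_sum_sum_mul_sum_eq_sum_factor _ _ _ _ _ _ _ _ _
  · rw [norm_mul]
    gcongr
    · exact (norm_sum_e_le_card _ fun b => by simp).trans (by simpa using (hd₁ r₁).le)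
    · exact (norm_sum_e_le_card _ fun b => by simp).trans (by simpa using (hd₂ r₂).le)

theorem stmt11 (p₁ p₂ : ℕ) (hp₁ : p₁.Prime) (hp₂ : p₂.Prime) (hne : p₁ ≠ p₂)
    (r₁ r₂ : ℕ) (hr₁ : 1 ≤ r₁) (hr₂ : 1 ≤ r₂) (Q N : ℕ) (hN : 1 ≤ N)
    (d₁ d₂ : ℕ → ℕ) (hd₁ : ∀ j, d₁ j < p₁) (hd₂ : ∀ j, d₂ j < p₂)
    (M₁ M₂ : ℤ) (hM₁ : (p₂ : ℤ) ^ r₂ * M₁ ≡ 1 [ZMOD (p₁ : ℤ) ^ r₁])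
    (hM₂ : (p₁ : ℤ) ^ r₁ * M₂ ≡ 1 [ZMOD (p₂ : ℤ) ^ r₂])
    (P : ℕ) (hP : P = p₁ ^ r₁ * p₂ ^ r₂)
    (X : ℤ) (hX0 : 0 ≤ X) (hX1 : X < (P : ℤ))
    (hX : X ≡
        M₁ * (p₂ : ℤ) ^ r₂ * (∑ j ∈ Finset.range r₁, (d₁ (j + 1) : ℤ) * (p₁ : ℤ) ^ j)
      + M₂ * (p₁ : ℤ) ^ r₁ * (∑ j ∈ Finset.range r₂, (d₂ (j + 1) : ℤ) * (p₂ : ℤ) ^ j)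
        [ZMOD (P : ℤ)])
    (Xb : ℕ → ℕ → ℤ)
    (hXb : ∀ b₁ b₂ : ℕ, Xb b₁ b₂ ≡
        M₁ * (p₂ : ℤ) ^ r₂ * (∑ j ∈ Finset.range (r₁ - 1), (d₁ (j + 1) : ℤ) * (p₁ : ℤ) ^ j
            + (b₁ : ℤ) * (p₁ : ℤ) ^ (r₁ - 1))
      + M₂ * (p₁ : ℤ) ^ r₁ * (∑ j ∈ Finset.range (r₂ - 1), (d₂ (j + 1) : ℤ) * (p₂ : ℤ) ^ j
            + (b₂ : ℤ) * (p₂ : ℤ) ^ (r₂ - 1)) [ZMOD (P : ℤ)]) :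
    (∑ b₁ ∈ Finset.range (d₁ r₁), ∑ b₂ ∈ Finset.range (d₂ r₂), ∑ k ∈ Finset.Ico Q (Q + N),
        ((if (P : ℤ) ∣ ((k : ℤ) - Xb b₁ b₂) then (1 : ℂ) else 0) - 1 / (P : ℂ)))
      = ∑ m ∈ (Finset.Icc (-(((P : ℤ) - 1) / 2)) ((P : ℤ) / 2)).erase 0,
          ((1 / (P : ℂ)) * ∑ k ∈ Finset.Ico Q (Q + N),
              Complex.exp (2 * (Real.pi : ℂ) * Complex.I * ((m : ℂ) * (k : ℂ) / (P : ℂ))))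
          * ((∑ b₁ ∈ Finset.range (d₁ r₁),
                Complex.exp (2 * (Real.pi : ℂ) * Complex.I *
                  (-(m : ℂ) * (M₁ : ℂ) * ((b₁ : ℂ) - (d₁ r₁ : ℂ)) / (p₁ : ℂ))))
            * (∑ b₂ ∈ Finset.range (d₂ r₂),
                Complex.exp (2 * (Real.pi : ℂ) * Complex.I *
                  (-(m : ℂ) * (M₂ : ℂ) * ((b₂ : ℂ) - (d₂ r₂ : ℂ)) / (p₂ : ℂ)))))
          * Complex.exp (2 * (Real.pi : ℂ) * Complex.I * (-(m : ℂ) * (X : ℂ) / (P : ℂ)))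
    ∧ ∀ m ∈ (Finset.Icc (-(((P : ℤ) - 1) / 2)) ((P : ℤ) / 2)).erase 0,
        ‖(1 / (P : ℂ)) * ∑ k ∈ Finset.Ico Q (Q + N),
            Complex.exp (2 * (Real.pi : ℂ) * Complex.I * ((m : ℂ) * (k : ℂ) / (P : ℂ)))‖
          ≤ 1 / ((max 1 |m| : ℤ) : ℝ)
      ∧ ‖(∑ b₁ ∈ Finset.range (d₁ r₁),
              Complex.exp (2 * (Real.pi : ℂ) * Complex.I *
                (-(m : ℂ) * (M₁ : ℂ) * ((b₁ : ℂ) - (d₁ r₁ : ℂ)) / (p₁ : ℂ))))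
          * (∑ b₂ ∈ Finset.range (d₂ r₂),
              Complex.exp (2 * (Real.pi : ℂ) * Complex.I *
                (-(m : ℂ) * (M₂ : ℂ) * ((b₂ : ℂ) - (d₂ r₂ : ℂ)) / (p₂ : ℂ))))‖
          ≤ (p₁ : ℝ) * (p₂ : ℝ) :=
  stmt11_general p₁ p₂ hp₁ hp₂ r₁ r₂ hr₁ hr₂ Q N d₁ d₂ hd₁ hd₂ M₁ M₂ P hP X hX Xb hXb
end

section
/- Let p₁ ≠ p₂ be primes and let n, V, 𝒱 be positive integers with V = p₁⁴p₂⁴⌊(log₂ n)⁴⌋ and 𝒱 = ⌊(log₂ n)³⌋. Then the number of quadruples (r_{1,1}, r_{2,1}, r_{1,2}, r_{2,2}) ∈ [1,n]⁴ satisfying max(r_{1,j}, r_{2,j}) > V for j = 1,2, |r_{1,1} − r_{1,2}| ≤ 𝒱, |r_{2,1} − r_{2,2}| ≤ 𝒱, and min(max(r_{1,1},r_{1,2}), max(r_{2,1},r_{2,2})) ≤ V, is at most C·n·V·𝒱² for an absolute constant C. -/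
/-!
The condition on the minimum puts one coordinate pair `(r₁ⱼ, r₂ⱼ)` into `[1, V]²`. A quadruple is
then fixed by `r₁ⱼ ≤ V`, the other `r₁ⱼ' ≤ n`, and the offsets of `r₂ⱼ, r₂ⱼ'` from them, which lie in
`[-𝒱, 𝒱]`; so there are at most `2 · V · n · (2𝒱 + 1)² ≤ 18 n V 𝒱²` quadruples, as `𝒱 ≥ 1`.
-/

open Finset

lemma card_filter_coord_close_le (S T : Finset (ℕ × ℕ)) (W : ℕ) :
    #((S ×ˢ T).filter fun q : (ℕ × ℕ) × ℕ × ℕ =>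
        max q.1.1 q.2.1 - min q.1.1 q.2.1 ≤ W ∧ max q.1.2 q.2.2 - min q.1.2 q.2.2 ≤ W)
      ≤ #S * (2 * W + 1) ^ 2 := by
  calc _ ≤ #(S ×ˢ (range (2 * W + 1) ×ˢ range (2 * W + 1))) := by
        refine card_le_card_of_injOn
          (fun q => (q.1, (q.2.1 + W - q.1.1, q.2.2 + W - q.1.2))) ?_ ?_
        · rintro ⟨⟨a, b⟩, c, d⟩ hq
          simp only [coe_filter, Set.mem_ofPred_eq, mem_product, coe_product, Set.mem_prod,
            mem_coe, coe_range, Set.mem_Iio] at hq ⊢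
          exact ⟨hq.1.1, by omega, by omega⟩
        · rintro ⟨⟨a, b⟩, c, d⟩ hq ⟨⟨a', b'⟩, c', d'⟩ hq' heq
          simp only [coe_filter, Set.mem_ofPred_eq, mem_product] at hq hq'
          simp only [Prod.mk.injEq] at heq ⊢
          omega
    _ = #S * (2 * W + 1) ^ 2 := by simp only [card_product, card_range]; ring

lemma card_quadruples_close_min_le (n V W : ℕ) :
    #(((Icc 1 n ×ˢ Icc 1 n) ×ˢ (Icc 1 n ×ˢ Icc 1 n)).filter fun q : (ℕ × ℕ) × ℕ × ℕ =>
        max q.1.1 q.2.1 - min q.1.1 q.2.1 ≤ W ∧ max q.1.2 q.2.2 - min q.1.2 q.2.2 ≤ W ∧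
        min (max q.1.1 q.2.1) (max q.1.2 q.2.2) ≤ V)
      ≤ 2 * (n * V * (2 * W + 1) ^ 2) := by
  set T := Icc 1 n ×ˢ Icc 1 n
  let close : (ℕ × ℕ) × ℕ × ℕ → Prop := fun q =>
    max q.1.1 q.2.1 - min q.1.1 q.2.1 ≤ W ∧ max q.1.2 q.2.2 - min q.1.2 q.2.2 ≤ W
  have hsub : (T ×ˢ T).filter (fun q : (ℕ × ℕ) × ℕ × ℕ =>
        max q.1.1 q.2.1 - min q.1.1 q.2.1 ≤ W ∧ max q.1.2 q.2.2 - min q.1.2 q.2.2 ≤ W ∧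
        min (max q.1.1 q.2.1) (max q.1.2 q.2.2) ≤ V) ⊆
      ((Icc 1 V ×ˢ Icc 1 n) ×ˢ T).filter close ∪ ((Icc 1 n ×ˢ Icc 1 V) ×ˢ T).filter close := by
    rintro ⟨⟨a, b⟩, c, d⟩ hq
    simp only [T, close, mem_filter, mem_union, mem_product, mem_Icc] at hq ⊢
    omega
  calc _ ≤ _ := card_le_card hsub
    _ ≤ _ := card_union_le _ _
    _ ≤ V * n * (2 * W + 1) ^ 2 + n * V * (2 * W + 1) ^ 2 := by
        gcongr
        · exact (card_filter_coord_close_le _ T W).trans_eq (by simp)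
        · exact (card_filter_coord_close_le _ T W).trans_eq (by simp)
    _ = 2 * (n * V * (2 * W + 1) ^ 2) := by ring

lemma one_le_floor_logb_pow {n : ℕ} (hn : 2 ≤ n) (k : ℕ) : 1 ≤ ⌊Real.logb 2 n ^ k⌋₊ := by
  have hlog : 1 ≤ Real.logb 2 n := by
    rw [Real.le_logb_iff_rpow_le (by norm_num) (by positivity)]
    exact_mod_cast (by simpa using hn : (2 : ℕ) ^ (1 : ℕ) ≤ n)
  exact Nat.le_floor (by simpa using one_le_pow₀ hlog)

theorem stmt16_general (p₁ p₂ : ℕ) :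
    ∃ C : ℝ, 0 < C ∧ ∀ n : ℕ, 2 ≤ n →
      ((((Finset.Icc 1 n ×ˢ Finset.Icc 1 n) ×ˢ (Finset.Icc 1 n ×ˢ Finset.Icc 1 n)).filter
          fun q : (ℕ × ℕ) × ℕ × ℕ =>
            p₁ ^ 4 * p₂ ^ 4 * ⌊Real.logb 2 n ^ 4⌋₊ < max q.1.1 q.1.2 ∧
            p₁ ^ 4 * p₂ ^ 4 * ⌊Real.logb 2 n ^ 4⌋₊ < max q.2.1 q.2.2 ∧
            max q.1.1 q.2.1 - min q.1.1 q.2.1 ≤ ⌊Real.logb 2 n ^ 3⌋₊ ∧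
            max q.1.2 q.2.2 - min q.1.2 q.2.2 ≤ ⌊Real.logb 2 n ^ 3⌋₊ ∧
            min (max q.1.1 q.2.1) (max q.1.2 q.2.2) ≤ p₁ ^ 4 * p₂ ^ 4 * ⌊Real.logb 2 n ^ 4⌋₊).card
        : ℝ)
      ≤ C * (n : ℝ) * ((p₁ ^ 4 * p₂ ^ 4 * ⌊Real.logb 2 n ^ 4⌋₊ : ℕ) : ℝ)
          * ((⌊Real.logb 2 n ^ 3⌋₊ : ℕ) : ℝ) ^ 2 := by
  refine ⟨18, by norm_num, fun n hn => ?_⟩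
  set V := p₁ ^ 4 * p₂ ^ 4 * ⌊Real.logb 2 n ^ 4⌋₊
  set W := ⌊Real.logb 2 n ^ 3⌋₊
  have hW : (2 * W + 1) ^ 2 ≤ 9 * W ^ 2 := by
    have := one_le_floor_logb_pow hn 3
    nlinarith
  calc _ ≤ ((2 * (n * V * (2 * W + 1) ^ 2) : ℕ) : ℝ) := by
        gcongr
        exact (card_le_card (monotone_filter_right _ fun _ _ hq => hq.2.2)).trans
          (card_quadruples_close_min_le n V W)
    _ ≤ ((18 * (n * V * W ^ 2) : ℕ) : ℝ) := by
        exact_mod_cast (by nlinarith [Nat.mul_le_mul_left (n * V) hW] :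
          2 * (n * V * (2 * W + 1) ^ 2) ≤ 18 * (n * V * W ^ 2))
    _ = 18 * (n : ℝ) * V * (W : ℝ) ^ 2 := by push_cast; ring

theorem stmt16 (p₁ p₂ : ℕ) (hp₁ : p₁.Prime) (hp₂ : p₂.Prime) (hne : p₁ ≠ p₂) :
    ∃ C : ℝ, 0 < C ∧ ∀ n : ℕ, 2 ≤ n →
      ((((Finset.Icc 1 n ×ˢ Finset.Icc 1 n) ×ˢ (Finset.Icc 1 n ×ˢ Finset.Icc 1 n)).filter
          fun q : (ℕ × ℕ) × ℕ × ℕ =>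
            p₁ ^ 4 * p₂ ^ 4 * ⌊Real.logb 2 n ^ 4⌋₊ < max q.1.1 q.1.2 ∧
            p₁ ^ 4 * p₂ ^ 4 * ⌊Real.logb 2 n ^ 4⌋₊ < max q.2.1 q.2.2 ∧
            max q.1.1 q.2.1 - min q.1.1 q.2.1 ≤ ⌊Real.logb 2 n ^ 3⌋₊ ∧
            max q.1.2 q.2.2 - min q.1.2 q.2.2 ≤ ⌊Real.logb 2 n ^ 3⌋₊ ∧
            min (max q.1.1 q.2.1) (max q.1.2 q.2.2) ≤ p₁ ^ 4 * p₂ ^ 4 * ⌊Real.logb 2 n ^ 4⌋₊).card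
        : ℝ)
      ≤ C * (n : ℝ) * ((p₁ ^ 4 * p₂ ^ 4 * ⌊Real.logb 2 n ^ 4⌋₊ : ℕ) : ℝ)
          * ((⌊Real.logb 2 n ^ 3⌋₊ : ℕ) : ℝ) ^ 2 :=
  stmt16_general p₁ p₂
end
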